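/- arXiv:1603.05876 — 3 statements merged into one kernel-verified Lean document; each statement's English description precedes it below -/
import Mathlib

section
/- For every n ∈ ℕ, every (x_1, …, x_n) ∈ X^n, and every u ∈ ℝ^n, one has ∑_{i_1,…,i_m = 1}^n K(x_{i_1}, …, x_{i_m}) u_{i_1} ⋯ u_{i_m} ≥ 0; that is, the tensor (K(x_{i_1},…,x_{i_m}))_{(i_1,…,i_m)∈{1,…,n}^m} of order m is positive definite. -/
/-! Expanding the product, `∑_{i_1,…,i_m} K(x_{i_1},…,x_{i_m}) u_{i_1}⋯u_{i_m}` equals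
`∑_k (∑_i φ_k(x_i) u_i)^m`, a sum of even powers. The interchange of the two sums is justified
by `|φ_k(y_1)⋯φ_k(y_m)| ≤ ∑_j |φ_k(y_j)|^m`, which makes every `k ↦ ∏_j φ_k(y_j)` summable. -/

open Finset

theorem abs_prod_le_sum_abs_pow {ι : Type*} [Fintype ι] [Nonempty ι] (a : ι → ℝ) :
    |∏ i, a i| ≤ ∑ i, |a i| ^ Fintype.card ι := by
  obtain ⟨i₀, -, hi₀⟩ := exists_max_image univ (fun i => |a i|) univ_nonempty
  calc |∏ i, a i| = ∏ i, |a i| := abs_prod _ _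
    _ ≤ ∏ _i, |a i₀| := prod_le_prod (fun i _ => abs_nonneg _) fun i _ => hi₀ i (mem_univ i)
    _ = |a i₀| ^ Fintype.card ι := by rw [prod_const, card_univ]
    _ ≤ ∑ i, |a i| ^ Fintype.card ι :=
        single_le_sum (f := fun i => |a i| ^ Fintype.card ι)
          (fun i _ => pow_nonneg (abs_nonneg _) _) (mem_univ i₀)

theorem summable_prod_of_summable_abs_pow {ι κ : Type*} [Fintype ι] [Nonempty ι]
    (f : ι → κ → ℝ) (hf : ∀ i, Summable fun k => |f i k| ^ Fintype.card ι) :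
    Summable fun k => ∏ i, f i k :=
  .of_abs <| (summable_sum fun i _ => hf i).of_nonneg_of_le (fun _ => abs_nonneg _)
    fun k => abs_prod_le_sum_abs_pow fun i => f i k

theorem sum_tsum_prod_mul_prod_eq_tsum_pow {α κ : Type*} [Fintype α] (m : ℕ)
    (g : κ → α → ℝ) (u : α → ℝ) (hg : ∀ iv : Fin m → α, Summable fun k => ∏ j, g k (iv j)) :
    ∑ iv : Fin m → α, (∑' k, ∏ j, g k (iv j)) * ∏ j, u (iv j) =
      ∑' k, (∑ i, g k i * u i) ^ m := by
  calc ∑ iv : Fin m → α, (∑' k, ∏ j, g k (iv j)) * ∏ j, u (iv j)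
      = ∑ iv : Fin m → α, ∑' k, (∏ j, g k (iv j)) * ∏ j, u (iv j) := by simp_rw [tsum_mul_right]
    _ = ∑' k, ∑ iv : Fin m → α, (∏ j, g k (iv j)) * ∏ j, u (iv j) :=
        (Summable.tsum_finsetSum fun iv _ => (hg iv).mul_right _).symm
    _ = ∑' k, (∑ i, g k i * u i) ^ m := by simp_rw [Fintype.sum_pow, prod_mul_distrib]

theorem stmt_3_general {𝕂 X : Type*} (m : ℕ) (hm : 2 ≤ m) (hme : Even m)
    (φ : 𝕂 → X → ℝ) (hΦ : ∀ x : X, Summable fun k => |φ k x| ^ m)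
    (n : ℕ) (x : Fin n → X) (u : Fin n → ℝ) :
    0 ≤ ∑ iv : Fin m → Fin n, (∑' k, ∏ j, φ k (x (iv j))) * ∏ j, u (iv j) := by
  have : Nonempty (Fin m) := ⟨⟨0, by omega⟩⟩
  have hsum (iv : Fin m → Fin n) : Summable fun k => ∏ j, φ k (x (iv j)) :=
    summable_prod_of_summable_abs_pow (fun j k => φ k (x (iv j)))
      fun j => by simpa using hΦ (x (iv j))
  rw [sum_tsum_prod_mul_prod_eq_tsum_pow m (fun k i => φ k (x i)) u hsum]
  exact tsum_nonneg fun k => hme.pow_nonneg _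

/-- Positive definiteness of the tensor kernel: for every `n`, points `x_1,…,x_n ∈ X` and
`u ∈ ℝ^n`, `∑_{i_1,…,i_m} K(x_{i_1},…,x_{i_m}) u_{i_1}⋯u_{i_m} ≥ 0`, where
`K(x'_1,…,x'_m) = ∑_k φ_k(x'_1)⋯φ_k(x'_m)`. -/
theorem stmt_3 {𝕂 X : Type*} [Countable 𝕂] [Nonempty X] (m : ℕ) (hm : 2 ≤ m) (hme : Even m)
    (φ : 𝕂 → X → ℝ) (hΦ : ∀ x : X, Summable fun k => |φ k x| ^ m)
    (n : ℕ) (x : Fin n → X) (u : Fin n → ℝ) :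
    0 ≤ ∑ iv : Fin m → Fin n, (∑' k, ∏ j, φ k (x (iv j))) * ∏ j, u (iv j) :=
  stmt_3_general m hm hme φ hΦ n x u
end

section
/- Let n ∈ ℕ, (x_1, …, x_n) ∈ X^n, u ∈ ℝ^n, and c ∈ ℝ, and define w = (w_k)_{k∈𝕂} by w_k = c · (∑_{i=1}^n u_i φ_k(x_i))^{m−1}. Then w belongs to ℓ^r(𝕂) with r = m/(m−1), and for every x ∈ X the family (w_k φ_k(x))_{k∈𝕂} is absolutely summable with ∑_{k∈𝕂} w_k φ_k(x) = c · ∑_{i_1, …, i_{m−1} = 1}^n K(x_{i_1}, …, x_{i_{m−1}}, x) u_{i_1} ⋯ u_{i_{m−1}}. -/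
/-!
Expanding the power multinomially writes `w_k φ_k(x₀)` as a finite linear combination of products
`φ_k(y_1) ⋯ φ_k(y_m)`. Since `|a_1 ⋯ a_m| ≤ ∑ |a_j|^m`, each such product is summable in `k` when
`Φ(y_j) ∈ ℓ^m`, so the finite expansion commutes with `∑_k`. The same expansion of the `m`-th power
shows `∑_k |S_k|^m < ∞` for `S_k = ∑ u_i φ_k(x_i)`, and `|w_k|^{m/(m-1)} = |c|^{m/(m-1)} |S_k|^m`.
-/

open Finset

lemma sum_mul_pow_eq_sum_prod {ι R : Type*} [Fintype ι] [CommSemiring R] (u a : ι → R) (p : ℕ) :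
    (∑ i, u i * a i) ^ p = ∑ iv : Fin p → ι, (∏ j, u (iv j)) * ∏ j, a (iv j) := by
  simp only [sum_pow', Fintype.piFinset_univ, prod_mul_distrib]

lemma abs_prod_le_sum_abs_pow_card {ι : Type*} [Fintype ι] [Nonempty ι] (a : ι → ℝ) :
    |∏ j, a j| ≤ ∑ j, |a j| ^ Fintype.card ι := by
  obtain ⟨j₀, -, hj₀⟩ := exists_max_image univ (fun j => |a j|) univ_nonempty
  calc |∏ j, a j| = ∏ j, |a j| := abs_prod _ _
    _ ≤ ∏ _j : ι, |a j₀| := prod_le_prod (fun _ _ => abs_nonneg _) hj₀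
    _ = |a j₀| ^ Fintype.card ι := by rw [prod_const, card_univ]
    _ ≤ ∑ j, |a j| ^ Fintype.card ι :=
        single_le_sum (f := fun j => |a j| ^ Fintype.card ι)
          (fun j _ => pow_nonneg (abs_nonneg _) _) (mem_univ j₀)

section Summability

variable {𝕂 ι : Type*} [Fintype ι]

lemma summable_prod_of_summable_abs_pow_card [Nonempty ι] (f : ι → 𝕂 → ℝ)
    (hf : ∀ j, Summable fun k => |f j k| ^ Fintype.card ι) :
    Summable fun k => ∏ j, f j k :=
  (Summable.of_nonneg_of_le (fun _ => abs_nonneg _)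
    (fun k => abs_prod_le_sum_abs_pow_card (f · k)) (summable_sum fun j _ => hf j)).of_abs

lemma summable_prod_mul_of_summable_abs_pow (f : ι → 𝕂 → ℝ) (h : 𝕂 → ℝ)
    (hf : ∀ j, Summable fun k => |f j k| ^ (Fintype.card ι + 1))
    (hh : Summable fun k => |h k| ^ (Fintype.card ι + 1)) :
    Summable fun k => (∏ j, f j k) * h k := by
  have key := summable_prod_of_summable_abs_pow_card (fun (j : Option ι) k => j.elim (h k) (f · k))
    (by simpa [Fintype.card_option, Option.forall] using ⟨hh, hf⟩)
  simpa [Fintype.prod_option, mul_comm] using key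

lemma summable_sum_mul_pow (u : ι → ℝ) (g : ι → 𝕂 → ℝ) {p : ℕ}
    (hp : p ≠ 0) (hg : ∀ i, Summable fun k => |g i k| ^ p) :
    Summable fun k => (∑ i, u i * g i k) ^ p := by
  have : Nonempty (Fin p) := ⟨⟨0, Nat.pos_of_ne_zero hp⟩⟩
  simp only [sum_mul_pow_eq_sum_prod]
  refine summable_sum fun iv _ => (summable_prod_of_summable_abs_pow_card _ fun j => ?_).mul_left _
  simpa using hg (iv j)

lemma hasSum_sum_mul_pow_mul (u : ι → ℝ) (g : ι → 𝕂 → ℝ) (h : 𝕂 → ℝ) (p : ℕ)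
    (hg : ∀ i, Summable fun k => |g i k| ^ (p + 1))
    (hh : Summable fun k => |h k| ^ (p + 1)) :
    HasSum (fun k => (∑ i, u i * g i k) ^ p * h k)
      (∑ iv : Fin p → ι, (∑' k, (∏ j, g (iv j) k) * h k) * ∏ j, u (iv j)) := by
  have expand : ∀ k, (∑ i, u i * g i k) ^ p * h k
      = ∑ iv : Fin p → ι, ((∏ j, g (iv j) k) * h k) * ∏ j, u (iv j) := fun k => by
    rw [sum_mul_pow_eq_sum_prod, sum_mul]
    exact sum_congr rfl fun _ _ => by ring
  simp only [expand]
  exact hasSum_sum fun iv _ => (summable_prod_mul_of_summable_abs_pow _ _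
    (by simpa using fun j => hg (iv j)) (by simpa using hh)).hasSum.mul_right _

end Summability

lemma pow_sub_one_rpow_div_sub_one {a : ℝ} (ha : 0 ≤ a) {m : ℕ} (hm : 1 < m) :
    (a ^ (m - 1)) ^ ((m : ℝ) / (m - 1)) = a ^ m := by
  have hm' : (1 : ℝ) < m := by exact_mod_cast hm
  rw [← Real.rpow_natCast a (m - 1), ← Real.rpow_mul ha, Nat.cast_sub hm.le, Nat.cast_one,
    mul_div_cancel₀ _ (sub_ne_zero.mpr hm'.ne'), Real.rpow_natCast]

theorem stmt_8_general {𝕂 X : Type*} (m : ℕ) (hm : 2 ≤ m)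
    (φ : 𝕂 → X → ℝ) (hΦ : ∀ x : X, Summable fun k => |φ k x| ^ m)
    (n : ℕ) (x : Fin n → X) (u : Fin n → ℝ) (c : ℝ)
    (w : 𝕂 → ℝ) (hw : ∀ k, w k = c * (∑ i, u i * φ k (x i)) ^ (m - 1)) :
    Summable (fun k => |w k| ^ ((m : ℝ) / ((m : ℝ) - 1))) ∧
      ∀ x₀ : X,
        Summable (fun k => |w k * φ k x₀|) ∧
          ∑' k, w k * φ k x₀
            = c * ∑ iv : Fin (m - 1) → Fin n,
                (∑' k, (∏ j, φ k (x (iv j))) * φ k x₀) * ∏ j, u (iv j) := by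
  set S : 𝕂 → ℝ := fun k => ∑ i, u i * φ k (x i)
  have hw_rpow : ∀ k, |w k| ^ ((m : ℝ) / ((m : ℝ) - 1))
      = |c| ^ ((m : ℝ) / ((m : ℝ) - 1)) * |S k ^ m| := fun k => by
    rw [hw k, abs_mul, abs_pow, Real.mul_rpow (abs_nonneg _) (by positivity),
      pow_sub_one_rpow_div_sub_one (abs_nonneg _) hm, abs_pow]
  have hS : Summable fun k => S k ^ m :=
    summable_sum_mul_pow u (fun i k => φ k (x i)) (by omega) fun i => hΦ (x i)
  refine ⟨by simpa only [hw_rpow] using hS.abs.mul_left _, fun x₀ => ?_⟩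
  have hm1 : m - 1 + 1 = m := by omega
  have hsum := (hasSum_sum_mul_pow_mul u (fun i k => φ k (x i)) (φ · x₀) (m - 1)
    (by simpa only [hm1] using fun i => hΦ (x i)) (by simpa only [hm1] using hΦ x₀)).mul_left c
  simp only [← mul_assoc, ← hw] at hsum
  exact ⟨hsum.summable.abs, hsum.tsum_eq⟩

/-- Tensor-kernel representation: if `w_k = c (∑_i u_i φ_k(x_i))^{m-1}`, then
`w ∈ ℓ^r(𝕂)` with `r = m/(m-1)`, and for every `x ∈ X` the family `(w_k φ_k(x))_k` is
absolutely summable with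
`∑_k w_k φ_k(x) = c ∑_{i_1,…,i_{m-1}} K(x_{i_1},…,x_{i_{m-1}}, x) u_{i_1}⋯u_{i_{m-1}}`. -/
theorem stmt_8 {𝕂 X : Type*} [Countable 𝕂] [Nonempty X] (m : ℕ) (hm : 2 ≤ m) (hme : Even m)
    (φ : 𝕂 → X → ℝ) (hΦ : ∀ x : X, Summable fun k => |φ k x| ^ m)
    (n : ℕ) (x : Fin n → X) (u : Fin n → ℝ) (c : ℝ)
    (w : 𝕂 → ℝ) (hw : ∀ k, w k = c * (∑ i, u i * φ k (x i)) ^ (m - 1)) :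
    Summable (fun k => |w k| ^ ((m : ℝ) / ((m : ℝ) - 1))) ∧
      ∀ x₀ : X,
        Summable (fun k => |w k * φ k x₀|) ∧
          ∑' k, w k * φ k x₀
            = c * ∑ iv : Fin (m - 1) → Fin n,
                (∑' k, (∏ j, φ k (x (iv j))) * φ k x₀) * ∏ j, u (iv j) :=
  stmt_8_general m hm φ hΦ n x u c w hw
end

section
/- For every n ∈ ℕ, every (x_1, …, x_n) ∈ X^n, and every u ∈ ℂ^n, one has ‖∑_{i=1}^n u_i Φ(x_i)‖_m^m = ∑_{i_1,…,i_q = 1}^n ∑_{j_1,…,j_q = 1}^n K(x_{j_1}, …, x_{j_q}; x_{i_1}, …, x_{i_q}) u_{i_1} ⋯ u_{i_q} · conj(u_{j_1}) ⋯ conj(u_{j_q}), where Φ(x) = (conj(φ_k(x)))_{k∈𝕂} ∈ ℓ^m(𝕂;ℂ); in particular this multiple sum is a nonnegative real number, i.e. the complex tensor (K(x_{j_1},…,x_{j_q}; x_{i_1},…,x_{i_q})) is positive definite. -/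
/-!
Since `‖z‖ ^ (2q) = z ^ q * conj z ^ q`, expanding both `q`-th powers of the finite sum
`z = ∑ᵢ uᵢ conj φₖ(xᵢ)` writes each term of the series as a finite sum of kernel terms
times coefficients in `u`. Exchanging this finite sum with the series over `k` is legitimate
because each kernel term is a product of `2q` sequences in `ℓ^{2q}`, and such a product is
dominated by the sum of the `2q`-th powers of its factors, hence summable.
-/

open ComplexConjugate

theorem Finset.prod_le_sum_pow_card {ι : Type*} {s : Finset ι} (hs : s.Nonempty) {f : ι → ℝ}
    (hf : ∀ i ∈ s, 0 ≤ f i) : ∏ i ∈ s, f i ≤ ∑ i ∈ s, f i ^ s.card := by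
  obtain ⟨i₀, hi₀, hmax⟩ := s.exists_max_image f hs
  calc ∏ i ∈ s, f i ≤ ∏ _i ∈ s, f i₀ := Finset.prod_le_prod hf hmax
    _ = f i₀ ^ s.card := Finset.prod_const _
    _ ≤ ∑ i ∈ s, f i ^ s.card :=
      Finset.single_le_sum (fun i hi => pow_nonneg (hf i hi) _) hi₀

theorem summable_prod_of_summable_norm_pow {ι κ R : Type*} [Fintype ι] [Nonempty ι]
    [NormedCommRing R] [NormOneClass R] [CompleteSpace R] {f : ι → κ → R}
    (hf : ∀ i, Summable fun k => ‖f i k‖ ^ Fintype.card ι) :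
    Summable fun k => ∏ i, f i k :=
  (summable_sum fun i _ => hf i).of_norm_bounded fun _ =>
    (Finset.norm_prod_le _ _).trans
      (Finset.prod_le_sum_pow_card Finset.univ_nonempty fun _ _ => norm_nonneg _)

theorem summable_prod_mul_prod_conj {κ X : Type*} {q : ℕ} (hq : 1 ≤ q) {φ : κ → X → ℂ}
    (hφ : ∀ x, Summable fun k => ‖φ k x‖ ^ (2 * q)) (y z : Fin q → X) :
    Summable fun k => (∏ t, φ k (y t)) * ∏ t, conj (φ k (z t)) := by
  have : Nonempty (Fin q) := ⟨⟨0, hq⟩⟩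
  have h := summable_prod_of_summable_norm_pow
    (f := Sum.elim (fun t k => φ k (y t)) (fun t k => conj (φ k (z t))))
    (by rintro (t | t) <;> simpa [two_mul] using hφ _)
  simpa only [Fintype.prod_sum_type, Sum.elim_inl, Sum.elim_inr] using h

theorem Complex.ofReal_norm_pow_two_mul (z : ℂ) (q : ℕ) :
    ((‖z‖ ^ (2 * q) : ℝ) : ℂ) = z ^ q * conj z ^ q := by
  rw [← mul_pow, Complex.mul_conj', pow_mul]
  norm_cast

theorem sum_mul_conj_pow_mul_conj_pow {ι : Type*} [Fintype ι] (q : ℕ) (u a : ι → ℂ) :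
    (∑ i, u i * conj (a i)) ^ q * conj (∑ i, u i * conj (a i)) ^ q
      = ∑ jv : Fin q → ι, ∑ iv : Fin q → ι,
          ((∏ t, a (jv t)) * ∏ t, conj (a (iv t))) * ((∏ t, u (iv t)) * ∏ t, conj (u (jv t))) := by
  simp only [map_sum, map_mul, Complex.conj_conj, Fintype.sum_pow, Finset.sum_mul_sum]
  rw [Finset.sum_comm]
  refine Finset.sum_congr rfl fun jv _ => Finset.sum_congr rfl fun iv _ => ?_
  simp only [Finset.prod_mul_distrib]
  ring

theorem stmt_16_general {𝕂 X : Type*} (q : ℕ) (hq : 1 ≤ q)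
    (φ : 𝕂 → X → ℂ) (hΦ : ∀ x : X, Summable fun k => ‖φ k x‖ ^ (2 * q))
    (n : ℕ) (x : Fin n → X) (u : Fin n → ℂ) :
    ((∑' k : 𝕂, ‖∑ i, u i * (starRingEnd ℂ) (φ k (x i))‖ ^ (2 * q) : ℝ) : ℂ)
        = ∑ jv : Fin q → Fin n, ∑ iv : Fin q → Fin n,
            (∑' k, (∏ t, φ k (x (jv t))) * ∏ t, (starRingEnd ℂ) (φ k (x (iv t))))
              * ((∏ t, u (iv t)) * ∏ t, (starRingEnd ℂ) (u (jv t))) ∧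
      0 ≤ ∑' k : 𝕂, ‖∑ i, u i * (starRingEnd ℂ) (φ k (x i))‖ ^ (2 * q) := by
  have hkernel (jv iv : Fin q → Fin n) : Summable fun k =>
      ((∏ t, φ k (x (jv t))) * ∏ t, conj (φ k (x (iv t))))
        * ((∏ t, u (iv t)) * ∏ t, conj (u (jv t))) :=
    (summable_prod_mul_prod_conj hq hΦ (x ∘ jv) (x ∘ iv)).mul_right _
  refine ⟨?_, tsum_nonneg fun k => by positivity⟩
  rw [Complex.ofReal_tsum]
  simp_rw [Complex.ofReal_norm_pow_two_mul, sum_mul_conj_pow_mul_conj_pow]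
  rw [Summable.tsum_finsetSum fun jv _ => summable_sum fun iv _ => hkernel jv iv]
  simp_rw [Summable.tsum_finsetSum fun iv _ => hkernel _ iv, tsum_mul_right]

/-- Complex tensor-kernel expansion of the `ℓ^m` norm (`m = 2q`): with
`Φ(x) = (conj φ_k(x))_k`, one has
`‖∑_i u_i Φ(x_i)‖_m^m = ∑_{i_1,…,i_q} ∑_{j_1,…,j_q} K(x_{j_1},…,x_{j_q}; x_{i_1},…,x_{i_q})
u_{i_1}⋯u_{i_q} conj(u_{j_1})⋯conj(u_{j_q})`; in particular the multiple sum is a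
nonnegative real number, i.e. the complex tensor kernel is positive definite. -/
theorem stmt_16 {𝕂 X : Type*} [Countable 𝕂] [Nonempty X] (q : ℕ) (hq : 1 ≤ q)
    (φ : 𝕂 → X → ℂ) (hΦ : ∀ x : X, Summable fun k => ‖φ k x‖ ^ (2 * q))
    (n : ℕ) (x : Fin n → X) (u : Fin n → ℂ) :
    ((∑' k : 𝕂, ‖∑ i, u i * (starRingEnd ℂ) (φ k (x i))‖ ^ (2 * q) : ℝ) : ℂ)
        = ∑ jv : Fin q → Fin n, ∑ iv : Fin q → Fin n,
            (∑' k, (∏ t, φ k (x (jv t))) * ∏ t, (starRingEnd ℂ) (φ k (x (iv t))))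
              * ((∏ t, u (iv t)) * ∏ t, (starRingEnd ℂ) (u (jv t))) ∧
      0 ≤ ∑' k : 𝕂, ‖∑ i, u i * (starRingEnd ℂ) (φ k (x i))‖ ^ (2 * q) :=
  stmt_16_general q hq φ hΦ n x u
end
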